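/- Let (H,w) be a weighted graph and uv ∈ E(H). Let μ₁, μ₂, μ be fractional matchings in H with μ₁(e) + μ₂(e) ≤ μ(e) for every edge e, and let (H,w̄) be the μ₁-truncated weighted digraph obtained from (the associated weighted digraph of) (H,w). Then, for any γ₁, γ₂ > 0, there is a (γ₁,γ₂)-skew-matching pair (σ₁,σ₂) in (H,w) anchored in the oriented edge (u,v) with W(σ₁) = deg_w(u,μ₁), W(σ₂) = deg_{w̄}(v,μ₂), and σ₁ + σ₂ ⊴ μ. -/

import Mathlib

attribute [local instance] Classical.propDecidable

namespace SkewStmt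

variable {V : Type*} [Fintype V]

/-- `w` is the weight function of a weighted digraph on `G`: it assigns a nonnegative
real to every ordered pair and vanishes on non-adjacent pairs (weights need not be
symmetric). -/
def IsDiWeight (G : SimpleGraph V) (w : V → V → ℝ) : Prop :=
  (∀ u v, 0 ≤ w u v) ∧ ∀ u v, ¬ G.Adj u v → w u v = 0

/-- `w` is the weight function of a weighted graph on `G`: nonnegative, vanishing on
non-adjacent pairs, and symmetric. -/
def IsWeight (G : SimpleGraph V) (w : V → V → ℝ) : Prop :=
  IsDiWeight G w ∧ ∀ u v, w u v = w v u

/-- `μ` is a fractional matching in `G`, encoded as a symmetric function on ordered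
pairs with values in `[0,1]`, vanishing off edges, with vertex weights at most `1`. -/
def IsFrac (G : SimpleGraph V) (μ : V → V → ℝ) : Prop :=
  (∀ u v, μ u v = μ v u) ∧ (∀ u v, 0 ≤ μ u v) ∧ (∀ u v, μ u v ≤ 1) ∧
    (∀ u v, ¬ G.Adj u v → μ u v = 0) ∧ ∀ u, ∑ v, μ u v ≤ 1

/-- Vertex weight `μ(u)` of a fractional matching. -/
noncomputable def mv (μ : V → V → ℝ) (u : V) : ℝ := ∑ v, μ u v

/-- Weight `W(μ)` of a fractional matching: the sum over the (undirected) edges,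
i.e. half of the sum over all ordered pairs. -/
noncomputable def mweight (μ : V → V → ℝ) : ℝ := (∑ u, ∑ v, μ u v) / 2

/-- `σ` is a `γ`-skew oriented fractional matching in the associated digraph `G↔`:
a function on oriented edges with values in `[0,1]`, vanishing off edges, such that
`∑_{v ∈ N(u)} (σ(u,v)/(1+γ) + γ·σ(v,u)/(1+γ)) ≤ 1` for every vertex `u`. -/
def IsSkew (G : SimpleGraph V) (γ : ℝ) (σ : V → V → ℝ) : Prop :=
  (∀ u v, 0 ≤ σ u v) ∧ (∀ u v, σ u v ≤ 1) ∧ (∀ u v, ¬ G.Adj u v → σ u v = 0) ∧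
    ∀ u, ∑ v, (σ u v / (1 + γ) + γ * σ v u / (1 + γ)) ≤ 1

/-- `σ¹(u) = (1/(1+γ)) ∑_v σ(u,v)`. -/
noncomputable def s1 (γ : ℝ) (σ : V → V → ℝ) (u : V) : ℝ := (∑ v, σ u v) / (1 + γ)

/-- `σ²(u) = (γ/(1+γ)) ∑_v σ(v,u)`. -/
noncomputable def s2 (γ : ℝ) (σ : V → V → ℝ) (u : V) : ℝ := γ * (∑ v, σ v u) / (1 + γ)

/-- `σ(u) = σ¹(u) + σ²(u)`, the weight of a skew-matching on a vertex. -/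
noncomputable def sv (γ : ℝ) (σ : V → V → ℝ) (u : V) : ℝ := s1 γ σ u + s2 γ σ u

/-- Weight `W(σ)` of a skew-matching: the sum over all oriented edges. -/
noncomputable def skweight (σ : V → V → ℝ) : ℝ := ∑ u, ∑ v, σ u v

/-- The anchor of `σ` fits in the `w`-neighbourhood of `u`: `σ¹(v) ≤ w(u,v)` for all `v`. -/
def AnchorFits (w : V → V → ℝ) (γ : ℝ) (σ : V → V → ℝ) (u : V) : Prop :=
  ∀ v, s1 γ σ v ≤ w u v

/-- The anchor `𝒜(σ) = {v : σ¹(v) > 0}` of `σ` is contained in `U`. -/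
def AnchorSub (γ : ℝ) (σ : V → V → ℝ) (U : Finset V) : Prop :=
  ∀ v, 0 < s1 γ σ v → v ∈ U

/-- `(σA, σB)` is a `(γA,γB)`-skew-matching pair anchored in the oriented edge `(c,d)`:
`σA`, `σB` are disjoint skew-matchings with the respective skews, the anchor of `σA`
fits in the `w`-neighbourhood of `c`, the anchor of `σB` fits in the
`w`-neighbourhood of `d`, and `max{w(c,x),w(d,x)} ≥ σA¹(x)+σB¹(x)` for every common
neighbour `x` of `c` and `d`. -/
def IsPairAnchored (G : SimpleGraph V) (w : V → V → ℝ) (γA γB : ℝ)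
    (σA σB : V → V → ℝ) (c d : V) : Prop :=
  IsSkew G γA σA ∧ IsSkew G γB σB ∧
    (∀ u, sv γA σA u + sv γB σB u ≤ 1) ∧
    AnchorFits w γA σA c ∧ AnchorFits w γB σB d ∧
    ∀ x, G.Adj c x → G.Adj d x → s1 γA σA x + s1 γB σB x ≤ max (w c x) (w d x)

/-- `σ ⊴ μ` for a `γ`-skew-matching `σ` and a fractional matching `μ`. -/
def Dom (γ : ℝ) (σ μ : V → V → ℝ) : Prop :=
  ∀ x y, 0 < σ x y + σ y x → (σ x y + γ * σ y x) / (1 + γ) ≤ μ x y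

/-- `σA + σB ⊴ μ` for skew-matchings `σA, σB` with skews `γA, γB` and a fractional
matching `μ`. -/
def Dom2 (γA γB : ℝ) (σA σB μ : V → V → ℝ) : Prop :=
  ∀ x y, 0 < σA x y + σA y x + σB x y + σB y x →
    (σA x y + γA * σA y x) / (1 + γA) + (σB x y + γB * σB y x) / (1 + γB) ≤ μ x y

/-- Saturation `deg_w(u, ν) = ∑_v min{ν(v), w(u,v)}` of the neighbourhood of `u` by an
object with vertex weights `f`. -/
noncomputable def satdeg (w : V → V → ℝ) (u : V) (f : V → ℝ) : ℝ := ∑ v, min (f v) (w u v)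

/-- The fractional matching `μ` runs between the disjoint sets `U` and `W`. -/
def RunsBetween (μ : V → V → ℝ) (U W : Finset V) : Prop :=
  ∀ x y, 0 < μ x y → (x ∈ U ∧ y ∈ W) ∨ (x ∈ W ∧ y ∈ U)

/-- `σ'` (a `γ'`-skew-matching) is a skew sub-matching of `σ` (a `γ`-skew-matching). -/
def SkewLe (γ' γ : ℝ) (σ' σ : V → V → ℝ) : Prop :=
  ∀ u v, σ' u v / (1 + γ') ≤ σ u v / (1 + γ) ∧
    γ' * σ' u v / (1 + γ') ≤ γ * σ u v / (1 + γ)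

end SkewStmt

open SkewStmt

/-!
Both skew-matchings are obtained by scaling down the rows of `μ₁` and `μ₂`: the row of `μᵢ` at
`x` is multiplied by `min{μᵢ(x), ω(x)} / μᵢ(x)`, where `ω = w(u,·)` for `σ₁` and `ω = w̄(v,·)`
for `σ₂`. Any `σ ≤ μᵢ` is a `γ`-skew-matching with `σ ⊴ μᵢ` and `σ(x) ≤ μᵢ(x)`, because both
`σ(x,y)` and `σ(y,x)` are at most `μᵢ(xy)`; so disjointness and `σ₁ + σ₂ ⊴ μ` follow from
`μ₁ + μ₂ ≤ μ`. On a common neighbour `x`, the truncation `w̄(v,x) = max{0, w(v,x) - μ₁(x)}`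
makes `σ₁¹(x) + σ₂¹(x) ≤ min{μ₁(x), w(u,x)} + min{μ₂(x), w̄(v,x)} ≤ max{w(u,x), w(v,x)}`.
-/

namespace SkewStmt

variable {V : Type*} [Fintype V]

lemma add_mul_div_one_add_le {a b m γ : ℝ} (hγ : 0 ≤ γ) (ha : a ≤ m) (hb : b ≤ m) :
    (a + γ * b) / (1 + γ) ≤ m := by
  rw [div_le_iff₀ (by linarith)]
  nlinarith [mul_le_mul_of_nonneg_left hb hγ]

lemma min_add_min_max_sub_le_max (a b p q : ℝ) :
    min a p + min b (max 0 (q - a)) ≤ max p q := by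
  rcases le_total q a with h | h
  · have : max 0 (q - a) = 0 := max_eq_left (by linarith)
    linarith [min_le_right a p, min_le_right b (max 0 (q - a)), le_max_left p q]
  · have : max 0 (q - a) = q - a := max_eq_right (by linarith)
    linarith [min_le_left a p, min_le_right b (max 0 (q - a)), le_max_right p q]

lemma mv_nonneg {μ : V → V → ℝ} (hμ : ∀ x y, 0 ≤ μ x y) (x : V) : 0 ≤ mv μ x :=
  Finset.sum_nonneg fun y _ => hμ x y

lemma sv_eq (γ : ℝ) (σ : V → V → ℝ) (x : V) :
    sv γ σ x = ((∑ y, σ x y) + γ * ∑ y, σ y x) / (1 + γ) := by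
  rw [sv, s1, s2, add_div]

lemma sum_skew_eq_sv (γ : ℝ) (σ : V → V → ℝ) (x : V) :
    ∑ y, (σ x y / (1 + γ) + γ * σ y x / (1 + γ)) = sv γ σ x := by
  rw [Finset.sum_add_distrib, ← Finset.sum_div, ← Finset.sum_div, ← Finset.mul_sum, sv, s1, s2]

lemma s1_le_sum {γ : ℝ} (hγ : 0 ≤ γ) {σ : V → V → ℝ} (hσ : ∀ x y, 0 ≤ σ x y) (x : V) :
    s1 γ σ x ≤ ∑ y, σ x y :=
  div_le_self (Finset.sum_nonneg fun y _ => hσ x y) (by linarith)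

section Dominated

variable {G : SimpleGraph V} {μ σ : V → V → ℝ} {γ : ℝ}

lemma IsFrac.skew_le_of_le (hμ : IsFrac G μ) (hγ : 0 ≤ γ) (hσ : ∀ x y, σ x y ≤ μ x y)
    (x y : V) : (σ x y + γ * σ y x) / (1 + γ) ≤ μ x y :=
  add_mul_div_one_add_le hγ (hσ x y) ((hσ y x).trans_eq (hμ.1 y x))

lemma IsFrac.sv_le_of_le (hμ : IsFrac G μ) (hγ : 0 ≤ γ) (hσ : ∀ x y, σ x y ≤ μ x y) (x : V) :
    sv γ σ x ≤ mv μ x := by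
  have hcol : ∑ y, σ y x ≤ mv μ x :=
    Finset.sum_le_sum fun y _ => (hσ y x).trans_eq (hμ.1 y x)
  rw [sv_eq]
  exact add_mul_div_one_add_le hγ (Finset.sum_le_sum fun y _ => hσ x y) hcol

lemma IsFrac.isSkew_of_le (hμ : IsFrac G μ) (hγ : 0 ≤ γ) (hσ₀ : ∀ x y, 0 ≤ σ x y)
    (hσ : ∀ x y, σ x y ≤ μ x y) : IsSkew G γ σ := by
  refine ⟨hσ₀, fun x y => (hσ x y).trans (hμ.2.2.1 x y), fun x y hxy => ?_, fun x => ?_⟩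
  · exact le_antisymm ((hσ x y).trans_eq (hμ.2.2.2.1 x y hxy)) (hσ₀ x y)
  · rw [sum_skew_eq_sv]
    exact (hμ.sv_le_of_le hγ hσ x).trans (hμ.2.2.2.2 x)

end Dominated

/-- Rows with `mv μ x = 0` stay zero through `a / 0 = 0`, so no case split is needed. -/
noncomputable def scaleRows (μ : V → V → ℝ) (ω : V → ℝ) : V → V → ℝ :=
  fun x y => min (mv μ x) (ω x) / mv μ x * μ x y

section ScaleRows

variable {μ : V → V → ℝ} {ω : V → ℝ}

lemma scaleRows_nonneg (hμ : ∀ x y, 0 ≤ μ x y) (hω : ∀ x, 0 ≤ ω x) (x y : V) :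
    0 ≤ scaleRows μ ω x y :=
  mul_nonneg (div_nonneg (le_min (mv_nonneg hμ x) (hω x)) (mv_nonneg hμ x)) (hμ x y)

lemma scaleRows_le (hμ : ∀ x y, 0 ≤ μ x y) (x y : V) : scaleRows μ ω x y ≤ μ x y := by
  have hfactor : min (mv μ x) (ω x) / mv μ x ≤ 1 := by
    rcases (mv_nonneg hμ x).eq_or_lt with h | h
    · rw [← h, div_zero]; exact zero_le_one
    · exact (div_le_one h).mpr (min_le_left _ _)
  exact mul_le_of_le_one_left (hμ x y) hfactor

lemma sum_scaleRows (hω : ∀ x, 0 ≤ ω x) (x : V) :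
    ∑ y, scaleRows μ ω x y = min (mv μ x) (ω x) := by
  simp only [scaleRows, ← Finset.mul_sum]
  change min (mv μ x) (ω x) / mv μ x * mv μ x = _
  rcases eq_or_ne (mv μ x) 0 with h | h
  · rw [h, mul_zero, min_eq_left (hω x)]
  · exact div_mul_cancel₀ _ h

lemma s1_scaleRows_le {γ : ℝ} (hγ : 0 ≤ γ) (hμ : ∀ x y, 0 ≤ μ x y) (hω : ∀ x, 0 ≤ ω x)
    (x : V) : s1 γ (scaleRows μ ω) x ≤ min (mv μ x) (ω x) :=
  (s1_le_sum hγ (scaleRows_nonneg hμ hω) x).trans_eq (sum_scaleRows hω x)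

lemma skweight_scaleRows {w : V → V → ℝ} {a : V} (hw : ∀ x, 0 ≤ w a x) :
    skweight (scaleRows μ (w a)) = satdeg w a (mv μ) :=
  Finset.sum_congr rfl fun x _ => sum_scaleRows hw x

end ScaleRows

end SkewStmt

theorem filling_disjoint_matchings_general {V : Type*} [Fintype V]
    (H : SimpleGraph V) (w : V → V → ℝ) (hw : IsWeight H w)
    (u v : V)
    (μ₁ μ₂ μ : V → V → ℝ)
    (hμ₁ : IsFrac H μ₁) (hμ₂ : IsFrac H μ₂) (hμ : IsFrac H μ)
    (hle : ∀ x y, μ₁ x y + μ₂ x y ≤ μ x y)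
    (γ₁ γ₂ : ℝ) (hγ₁ : 0 < γ₁) (hγ₂ : 0 < γ₂) :
    ∃ σ₁ σ₂ : V → V → ℝ,
      IsPairAnchored H w γ₁ γ₂ σ₁ σ₂ u v ∧
      skweight σ₁ = satdeg w u (mv μ₁) ∧
      skweight σ₂ = satdeg (fun a x => max 0 (w a x - mv μ₁ x)) v (mv μ₂) ∧
      Dom2 γ₁ γ₂ σ₁ σ₂ μ := by
  obtain ⟨⟨hw₀, -⟩, -⟩ := hw
  set wt : V → V → ℝ := fun a x => max 0 (w a x - mv μ₁ x)
  have hwt₀ : ∀ x, 0 ≤ wt v x := fun x => le_max_left _ _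
  have hwt : ∀ x, wt v x ≤ w v x := fun x =>
    max_le (hw₀ v x) (by linarith [mv_nonneg hμ₁.2.1 x])
  have hσ₁ := scaleRows_le (ω := w u) hμ₁.2.1
  have hσ₂ := scaleRows_le (ω := wt v) hμ₂.2.1
  have hs₁ := s1_scaleRows_le hγ₁.le hμ₁.2.1 (hw₀ u)
  have hs₂ := s1_scaleRows_le hγ₂.le hμ₂.2.1 hwt₀
  have hmv : ∀ x, mv μ₁ x + mv μ₂ x ≤ 1 := fun x => by
    refine le_trans ?_ (hμ.2.2.2.2 x)
    rw [mv, mv, ← Finset.sum_add_distrib]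
    exact Finset.sum_le_sum fun y _ => hle x y
  refine ⟨scaleRows μ₁ (w u), scaleRows μ₂ (wt v), ⟨?_, ?_, fun x => ?_, fun x => ?_,
    fun x => ?_, fun x _ _ => ?_⟩, skweight_scaleRows (hw₀ u),
    skweight_scaleRows hwt₀, fun x y _ => ?_⟩
  · exact hμ₁.isSkew_of_le hγ₁.le (scaleRows_nonneg hμ₁.2.1 (hw₀ u)) hσ₁
  · exact hμ₂.isSkew_of_le hγ₂.le (scaleRows_nonneg hμ₂.2.1 hwt₀) hσ₂
  · linarith [hμ₁.sv_le_of_le hγ₁.le hσ₁ x, hμ₂.sv_le_of_le hγ₂.le hσ₂ x, hmv x]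
  · exact (hs₁ x).trans (min_le_right _ _)
  · exact ((hs₂ x).trans (min_le_right _ _)).trans (hwt x)
  · linarith [hs₁ x, hs₂ x, min_add_min_max_sub_le_max (mv μ₁ x) (mv μ₂ x) (w u x) (w v x)]
  · linarith [hμ₁.skew_le_of_le hγ₁.le hσ₁ x y, hμ₂.skew_le_of_le hγ₂.le hσ₂ x y, hle x y]

/-- Filling disjoint matchings. -/
theorem filling_disjoint_matchings {V : Type*} [Fintype V]
    (H : SimpleGraph V) (w : V → V → ℝ) (hw : IsWeight H w)
    (u v : V) (huv : H.Adj u v)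
    (μ₁ μ₂ μ : V → V → ℝ)
    (hμ₁ : IsFrac H μ₁) (hμ₂ : IsFrac H μ₂) (hμ : IsFrac H μ)
    (hle : ∀ x y, μ₁ x y + μ₂ x y ≤ μ x y)
    (γ₁ γ₂ : ℝ) (hγ₁ : 0 < γ₁) (hγ₂ : 0 < γ₂) :
    ∃ σ₁ σ₂ : V → V → ℝ,
      IsPairAnchored H w γ₁ γ₂ σ₁ σ₂ u v ∧
      skweight σ₁ = satdeg w u (mv μ₁) ∧
      skweight σ₂ = satdeg (fun a x => max 0 (w a x - mv μ₁ x)) v (mv μ₂) ∧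
      Dom2 γ₁ γ₂ σ₁ σ₂ μ :=
  filling_disjoint_matchings_general H w hw u v μ₁ μ₂ μ hμ₁ hμ₂ hμ hle γ₁ γ₂ hγ₁ hγ₂
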